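/- For every integer n ≥ 1, √(e/π) · (1 - 1/(2(n+1/3)))^{n+1/3} · (1/√n) < W_n < √(e/π) · (1 - 1/(2(n+1/3)))^{n+1/3} · (1/√n) · exp(1/(144n³)). -/

import Mathlib

open Real Filter Topology

noncomputable def W (n : ℕ) : ℝ :=
  (∏ k ∈ Finset.range n, (2 * (k : ℝ) + 1)) / (∏ k ∈ Finset.range n, (2 * (k : ℝ) + 2))

lemma W_pos (n : ℕ) : 0 < W n := by
  apply div_pos <;> exact Finset.prod_pos (fun k _ => by positivity)

lemma W_succ (n : ℕ) : W (n + 1) = W n * ((2 * (n:ℝ) + 1) / (2 * (n:ℝ) + 2)) := by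
  have h2 : (0:ℝ) < ∏ k ∈ Finset.range n, (2 * (k : ℝ) + 2) :=
    Finset.prod_pos (fun k _ => by positivity)
  rw [W, W, Finset.prod_range_succ, Finset.prod_range_succ]
  field_simp

lemma W_eq (n : ℕ) : W n = (Nat.factorial (2*n) : ℝ) / (4^n * (Nat.factorial n : ℝ)^2) := by
  induction n with
  | zero => simp [W]
  | succ n ih =>
    have h1 : ((n:ℝ)+1) ≠ 0 := by positivity
    have h2 : ((Nat.factorial n) : ℝ) ≠ 0 := by exact_mod_cast (Nat.factorial_pos n).ne'
    rw [W_succ, ih, show 2*(n+1) = (2*n+1)+1 by ring, Nat.factorial_succ, Nat.factorial_succ,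
      Nat.factorial_succ]
    push_cast
    field_simp
    ring

lemma W_sq_eq (n : ℕ) (hn : 1 ≤ n) :
    (W n)^2 * n = (Stirling.stirlingSeq (2*n))^2 / (Stirling.stirlingSeq n)^4 := by
  have hn0 : (0:ℝ) < n := by exact_mod_cast hn
  have he : (0:ℝ) < exp 1 := exp_pos 1
  have hf1 : ((Nat.factorial (2*n)) : ℝ) ≠ 0 := by exact_mod_cast (Nat.factorial_pos _).ne'
  have hf2 : ((Nat.factorial n) : ℝ) ≠ 0 := by exact_mod_cast (Nat.factorial_pos _).ne'
  have e1 : Stirling.stirlingSeq n ^ 4 = ((Nat.factorial n : ℝ))^4 / ((2*(n:ℝ))^2 * (((n:ℝ)/exp 1)^n)^4) := by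
    have hs : (√(2*(n:ℝ)))^4 = (2*(n:ℝ))^2 := by
      rw [show (4:ℕ) = 2*2 from rfl, pow_mul, Real.sq_sqrt (by positivity)]
    rw [Stirling.stirlingSeq, div_pow, mul_pow, hs]
  have e2 : Stirling.stirlingSeq (2*n) ^ 2 = ((Nat.factorial (2*n) : ℝ))^2 /
      ((2*(2*(n:ℝ))) * ((4:ℝ)^n)^2 * (((n:ℝ)/exp 1)^n)^4) := by
    rw [Stirling.stirlingSeq, div_pow, mul_pow, Real.sq_sqrt (by positivity)]
    push_cast
    rw [show (2:ℝ)*n/exp 1 = 2*((n:ℝ)/exp 1) by ring, mul_pow, mul_pow,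
      show ((2:ℝ)^(2*n))^2 = ((4:ℝ)^n)^2 by rw [pow_mul]; norm_num,
      show ((((n:ℝ)/exp 1)^(2*n)):ℝ)^2 = (((n:ℝ)/exp 1)^n)^4 by rw [← pow_mul, ← pow_mul]; ring_nf]
    ring
  have hu : (((n:ℝ)/exp 1)^n) ≠ 0 := by positivity
  have h4 : ((4:ℝ)^n) ≠ 0 := by positivity
  rw [W_eq, e1, e2]
  field_simp

lemma W_sqrt_tendsto : Tendsto (fun n : ℕ => W n * Real.sqrt n) atTop (𝓝 (1/Real.sqrt π)) := by
  have h2n : Tendsto (fun n : ℕ => 2*n) atTop atTop :=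
    tendsto_atTop_mono (fun n => Nat.le_mul_of_pos_left n (by norm_num)) tendsto_id
  have hs := Stirling.tendsto_stirlingSeq_sqrt_pi
  have hπ : (0:ℝ) < √π := Real.sqrt_pos.2 Real.pi_pos
  have h1 : Tendsto (fun n : ℕ => (Stirling.stirlingSeq (2*n))^2 / (Stirling.stirlingSeq n)^4)
      atTop (𝓝 ((√π)^2/(√π)^4)) :=
    Tendsto.div ((hs.comp h2n).pow 2) (hs.pow 4) (by positivity)
  have hval : (√π)^2/(√π)^4 = 1/π := by
    rw [show ((√π):ℝ)^4 = ((√π)^2)^2 by ring, Real.sq_sqrt Real.pi_pos.le]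
    field_simp
  rw [hval] at h1
  have h2 : Tendsto (fun n : ℕ => (W n)^2 * n) atTop (𝓝 (1/π)) := by
    apply h1.congr'
    filter_upwards [eventually_ge_atTop 1] with n hn
    exact (W_sq_eq n hn).symm
  have h3 : Tendsto (fun n : ℕ => Real.sqrt ((W n)^2 * n)) atTop (𝓝 (Real.sqrt (1/π))) :=
    (Real.continuous_sqrt.continuousAt.tendsto).comp h2
  have h4 : ∀ n : ℕ, Real.sqrt ((W n)^2 * n) = W n * Real.sqrt n := by
    intro n
    rw [Real.sqrt_mul (sq_nonneg _), Real.sqrt_sq (W_pos n).le]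
  have h5 : Real.sqrt (1/π) = 1/Real.sqrt π := by
    rw [one_div, Real.sqrt_inv, one_div]
  rw [h5] at h3
  exact h3.congr (fun n => h4 n)

lemma rpart_tendsto :
    Tendsto (fun n : ℕ => ((n:ℝ)+1/3) * Real.log (1 - 1/(2*((n:ℝ)+1/3)))) atTop (𝓝 (-(1/2))) := by
  have hbase := Real.tendsto_mul_log_one_add_div_atTop (-1)
  have hcomp : Tendsto (fun n : ℕ => 2*((n:ℝ)+1/3)) atTop atTop := by
    apply tendsto_atTop_mono (fun n => by linarith : ∀ n : ℕ, (n:ℝ) ≤ 2*((n:ℝ)+1/3))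
    exact tendsto_natCast_atTop_atTop
  have h1 : Tendsto (fun n : ℕ => (2*((n:ℝ)+1/3)) * Real.log (1 + (-1)/(2*((n:ℝ)+1/3))))
      atTop (𝓝 (-1)) := hbase.comp hcomp
  have h2 := h1.const_mul (1/2 : ℝ)
  norm_num at h2
  apply h2.congr
  intro n
  have : (1:ℝ) + (-1)/(2*((n:ℝ)+1/3)) = 1 - 1/(2*((n:ℝ)+1/3)) := by ring
  rw [this]
  ring

noncomputable def G (n : ℕ) : ℝ :=
  Real.log (W n) + (1/2)*Real.log n - ((n:ℝ)+1/3)*Real.log (1 - 1/(2*((n:ℝ)+1/3)))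
    - 1/2 + (1/2)*Real.log π

lemma base_pos {x : ℝ} (hx : 1 ≤ x) : 0 < 1 - 1/(2*(x+1/3)) := by
  have h1 : (0:ℝ) < 2*(x+1/3) := by linarith
  have h2 : 1/(2*(x+1/3)) < 1 := by rw [div_lt_one h1]; linarith
  linarith

lemma G_tendsto : Tendsto G atTop (𝓝 0) := by
  have h1 : Tendsto (fun n : ℕ => Real.log (W n * Real.sqrt n)) atTop (𝓝 (Real.log (1/Real.sqrt π))) := by
    apply Filter.Tendsto.log W_sqrt_tendsto
    positivity
  have h2 := rpart_tendsto
  have hlim := (h1.sub h2).add (tendsto_const_nhds (x := -(1/2) + (1/2)*Real.log π))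
  have hval : Real.log (1/Real.sqrt π) - (-(1/2)) + (-(1/2) + (1/2)*Real.log π) = 0 := by
    rw [one_div, Real.log_inv, Real.log_sqrt Real.pi_pos.le]
    ring
  rw [hval] at hlim
  apply hlim.congr'
  filter_upwards [eventually_ge_atTop 1] with n hn
  have hn0 : (0:ℝ) < n := by exact_mod_cast hn
  rw [Real.log_mul (W_pos n).ne' (Real.sqrt_pos.2 hn0).ne', Real.log_sqrt hn0.le, G]
  ring

lemma G_diff_eq (n : ℕ) (hn : 1 ≤ n) :
    G (n+1) - G n =
      -(Real.log (1 + 1/(4*(n:ℝ)+3)) - Real.log (1 - 1/(4*(n:ℝ)+3)))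
      + (1/2)*(Real.log (1 + 1/(2*(n:ℝ)+1)) - Real.log (1 - 1/(2*(n:ℝ)+1)))
      + ((n:ℝ)+4/3)*(Real.log (1 + 3/(12*(n:ℝ)+13)) - Real.log (1 - 3/(12*(n:ℝ)+13)))
      - ((n:ℝ)+1/3)*(Real.log (1 + 3/(12*(n:ℝ)+1)) - Real.log (1 - 3/(12*(n:ℝ)+1))) := by
  have hx : (1:ℝ) ≤ (n:ℝ) := by exact_mod_cast hn
  set x := (n:ℝ) with hxdef
  have d1 : (4*x+3) ≠ 0 := by positivity
  have d2 : (2*x+1) ≠ 0 := by positivity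
  have d3 : (12*x+13) ≠ 0 := by positivity
  have d4 : (12*x+1) ≠ 0 := by positivity
  have d5 : (2*x+2) ≠ 0 := by positivity
  have xne : x ≠ 0 := by positivity
  have p1a : (0:ℝ) < 1 - 1/(4*x+3) := by rw [sub_pos, div_lt_one (by positivity)]; linarith
  have p1b : (0:ℝ) < 1 + 1/(4*x+3) := by positivity
  have p2a : (0:ℝ) < 1 - 1/(2*x+1) := by rw [sub_pos, div_lt_one (by positivity)]; linarith
  have p2b : (0:ℝ) < 1 + 1/(2*x+1) := by positivity
  have p3a : (0:ℝ) < 1 - 3/(12*x+13) := by rw [sub_pos, div_lt_one (by positivity)]; linarith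
  have p3b : (0:ℝ) < 1 + 3/(12*x+13) := by positivity
  have p4a : (0:ℝ) < 1 - 3/(12*x+1) := by rw [sub_pos, div_lt_one (by positivity)]; linarith
  have p4b : (0:ℝ) < 1 + 3/(12*x+1) := by positivity
  have hA : Real.log (W (n+1)) = Real.log (W n)
      + (Real.log (1 - 1/(4*x+3)) - Real.log (1 + 1/(4*x+3))) := by
    rw [W_succ, Real.log_mul (W_pos n).ne' (by positivity),
      show (2*x+1)/(2*x+2) = (1 - 1/(4*x+3))/(1 + 1/(4*x+3)) by field_simp; ring,
      Real.log_div p1a.ne' p1b.ne']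
  have hB : Real.log (x+1) = Real.log x
      + (Real.log (1 + 1/(2*x+1)) - Real.log (1 - 1/(2*x+1))) := by
    rw [show x+1 = x * ((1 + 1/(2*x+1))/(1 - 1/(2*x+1))) by field_simp; ring,
      Real.log_mul xne (by positivity), Real.log_div p2b.ne' p2a.ne']
  have hC : Real.log (1 - 1/(2*((x+1)+1/3)))
      = Real.log (1 - 3/(12*x+13)) - Real.log (1 + 3/(12*x+13)) := by
    rw [show (1:ℝ) - 1/(2*((x+1)+1/3)) = (1 - 3/(12*x+13))/(1 + 3/(12*x+13)) by
        have d6 : (2*((x+1)+1/3)) ≠ 0 := by positivity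
        field_simp
        ring,
      Real.log_div p3a.ne' p3b.ne']
  have hD : Real.log (1 - 1/(2*(x+1/3)))
      = Real.log (1 - 3/(12*x+1)) - Real.log (1 + 3/(12*x+1)) := by
    rw [show (1:ℝ) - 1/(2*(x+1/3)) = (1 - 3/(12*x+1))/(1 + 3/(12*x+1)) by
        have d7 : (2*(x+1/3)) ≠ 0 := by positivity
        field_simp
        ring,
      Real.log_div p4a.ne' p4b.ne']
  rw [G, G]
  push_cast
  rw [hA, hB, hC, hD]
  ring


lemma log_ratio_bounds {s : ℝ} (h0 : 0 ≤ s) (h1 : s ≤ 1/3) :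
    2*s + 2*s^3/3 + 2*s^5/5 - 3*s^7 ≤ log (1+s) - log (1-s) ∧
    log (1+s) - log (1-s) ≤ 2*s + 2*s^3/3 + 2*s^5/5 + 3*s^7 := by
  have habs : |s| < 1 := by rw [abs_of_nonneg h0]; linarith
  have h2 := Real.abs_log_sub_add_sum_range_le habs 6
  have habs' : |(-s)| < 1 := by rwa [abs_neg]
  have h3 := Real.abs_log_sub_add_sum_range_le habs' 6
  rw [abs_of_nonneg h0] at h2
  rw [abs_neg, abs_of_nonneg h0] at h3
  simp only [Finset.sum_range_succ, Finset.sum_range_zero] at h2 h3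
  rw [abs_le] at h2 h3
  norm_num at h2 h3
  have herr : s^7/(1-s) ≤ 3/2 * s^7 := by
    rw [div_le_iff₀ (by linarith)]
    nlinarith [pow_nonneg h0 7]
  have herr0 : 0 ≤ s^7/(1-s) := div_nonneg (by positivity) (by linarith)
  constructor <;> nlinarith [h2.1, h2.2, h3.1, h3.2]


set_option maxHeartbeats 2000000 in
lemma key1 {x : ℝ} (hx : 1 ≤ x) :
    -(2*(1/(4*x+3)) + 2*(1/(4*x+3))^3/3 + 2*(1/(4*x+3))^5/5 - 3*(1/(4*x+3))^7) + (1/2)*(2*(1/(2*x+1)) + 2*(1/(2*x+1))^3/3 + 2*(1/(2*x+1))^5/5 + 3*(1/(2*x+1))^7) + (x+4/3)*(2*(3/(12*x+13)) + 2*(3/(12*x+13))^3/3 + 2*(3/(12*x+13))^5/5 + 3*(3/(12*x+13))^7) - (x+1/3)*(2*(3/(12*x+1)) + 2*(3/(12*x+1))^3/3 + 2*(3/(12*x+1))^5/5 - 3*(3/(12*x+1))^7) < 0 := by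
  obtain ⟨y, hy, rfl⟩ : ∃ y, 0 ≤ y ∧ x = 1 + y := ⟨x-1, by linarith, by ring⟩
  have hd1 : (0:ℝ) < 4*(1+y)+3 := by linarith
  have hd2 : (0:ℝ) < 2*(1+y)+1 := by linarith
  have hd3 : (0:ℝ) < 12*(1+y)+13 := by linarith
  have hd4 : (0:ℝ) < 12*(1+y)+1 := by linarith
  have hN : (0:ℝ) < (5924843795281466308957629/2:ℝ) + (46946993874422594203761468:ℝ)*y + (1775095824849934331197643828/5:ℝ)*y^2 + (8525840198624474360594511832/5:ℝ)*y^3 + (87611291113259545422307908016/15:ℝ)*y^4 + (45558976494785511070721190944/3:ℝ)*y^5 + (31146462217088644355863282304:ℝ)*y^6 + (775359215005334117744245572736/15:ℝ)*y^7 + (211952437880630991936935105792/3:ℝ)*y^8 + (402597848737535747678720882688/5:ℝ)*y^9 + (385897278620716684038664122368/5:ℝ)*y^10 + (312867346845981167419176091648/5:ℝ)*y^11 + (215259290759904186888457486336/5:ℝ)*y^12 + (125825386802563325056242941952/5:ℝ)*y^13 + (12485418363156000586488348672:ℝ)*y^14 + (26208166955609899272845131776/5:ℝ)*y^15 + (9259157117070751140503617536/5:ℝ)*y^16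 + (2729762355003370396515827712/5:ℝ)*y^17 + (132688945840439186889375744:ℝ)*y^18 + (26125824405893855607521280:ℝ)*y^19 + (20316128283676825727533056/5:ℝ)*y^20 + (2402174748617719054073856/5:ℝ)*y^21 + (202920169275092644134912/5:ℝ)*y^22 + (10908968635726169112576/5:ℝ)*y^23 + (56095253661782900736:ℝ)*y^24 := by
    linarith [pow_nonneg hy 1, pow_nonneg hy 2, pow_nonneg hy 3, pow_nonneg hy 4, pow_nonneg hy 5, pow_nonneg hy 6, pow_nonneg hy 7, pow_nonneg hy 8, pow_nonneg hy 9, pow_nonneg hy 10, pow_nonneg hy 11, pow_nonneg hy 12, pow_nonneg hy 13, pow_nonneg hy 14, pow_nonneg hy 15, pow_nonneg hy 16, pow_nonneg hy 17, pow_nonneg hy 18, pow_nonneg hy 19, pow_nonneg hy 20, pow_nonneg hy 21, pow_nonneg hy 22, pow_nonneg hy 23, pow_nonneg hy 24]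
  have hD : (0:ℝ) < (4*(1+y)+3)^7*((2*(1+y)+1)^7*((12*(1+y)+13)^7*(12*(1+y)+1)^7)) :=
    mul_pos (pow_pos hd1 7) (mul_pos (pow_pos hd2 7) (mul_pos (pow_pos hd3 7) (pow_pos hd4 7)))
  have key : -(2*(1/(4*(1+y)+3)) + 2*(1/(4*(1+y)+3))^3/3 + 2*(1/(4*(1+y)+3))^5/5 - 3*(1/(4*(1+y)+3))^7) + (1/2)*(2*(1/(2*(1+y)+1)) + 2*(1/(2*(1+y)+1))^3/3 + 2*(1/(2*(1+y)+1))^5/5 + 3*(1/(2*(1+y)+1))^7) + ((1+y)+4/3)*(2*(3/(12*(1+y)+13)) + 2*(3/(12*(1+y)+13))^3/3 + 2*(3/(12*(1+y)+13))^5/5 + 3*(3/(12*(1+y)+13))^7) - ((1+y)+1/3)*(2*(3/(12*(1+y)+1)) + 2*(3/(12*(1+y)+1))^3/3 + 2*(3/(12*(1+y)+1))^5/5 - 3*(3/(12*(1+y)+1))^7)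
      = -(((5924843795281466308957629/2:ℝ) + (46946993874422594203761468:ℝ)*y + (1775095824849934331197643828/5:ℝ)*y^2 + (8525840198624474360594511832/5:ℝ)*y^3 + (87611291113259545422307908016/15:ℝ)*y^4 + (45558976494785511070721190944/3:ℝ)*y^5 + (31146462217088644355863282304:ℝ)*y^6 + (775359215005334117744245572736/15:ℝ)*y^7 + (211952437880630991936935105792/3:ℝ)*y^8 + (402597848737535747678720882688/5:ℝ)*y^9 + (385897278620716684038664122368/5:ℝ)*y^10 + (312867346845981167419176091648/5:ℝ)*y^11 + (215259290759904186888457486336/5:ℝ)*y^12 + (125825386802563325056242941952/5:ℝ)*y^13 + (12485418363156000586488348672:ℝ)*y^14 + (26208166955609899272845131776/5:ℝ)*y^15 + (9259157117070751140503617536/5:ℝ)*y^16 + (2729762355003370396515827712/5:ℝ)*y^17 + (132688945840439186889375744:ℝ)*y^18 + (26125824405893855607521280:ℝ)*y^19 + (20316128283676825727533056/5:ℝ)*y^20 + (2402174748617719054073856/5:ℝ)*y^21 + (202920169275092644134912/5:ℝ)*y^22 + (10908968635726169112576/5:ℝ)*y^23 + (56095253661782900736:ℝ)*y^24) / ((4*(1+y)+3)^7*((2*(1+y)+1)^7*((12*(1+y)+13)^7*(12*(1+y)+1)^7))))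 := by
    field_simp
    ring
  rw [key]
  exact neg_lt_zero.mpr (div_pos hN hD)


set_option maxHeartbeats 2000000 in
lemma key2 {x : ℝ} (hx : 1 ≤ x) :
    0 < -(2*(1/(4*x+3)) + 2*(1/(4*x+3))^3/3 + 2*(1/(4*x+3))^5/5 + 3*(1/(4*x+3))^7) + (1/2)*(2*(1/(2*x+1)) + 2*(1/(2*x+1))^3/3 + 2*(1/(2*x+1))^5/5 - 3*(1/(2*x+1))^7) + (x+4/3)*(2*(3/(12*x+13)) + 2*(3/(12*x+13))^3/3 + 2*(3/(12*x+13))^5/5 - 3*(3/(12*x+13))^7) - (x+1/3)*(2*(3/(12*x+1)) + 2*(3/(12*x+1))^3/3 + 2*(3/(12*x+1))^5/5 + 3*(3/(12*x+1))^7) + 1/(144*x^3) - 1/(144*(x+1)^3) := by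
  obtain ⟨y, hy, rfl⟩ : ∃ y, 0 ≤ y ∧ x = 1 + y := ⟨x-1, by linarith, by ring⟩
  have hd1 : (0:ℝ) < 4*(1+y)+3 := by linarith
  have hd2 : (0:ℝ) < 2*(1+y)+1 := by linarith
  have hd3 : (0:ℝ) < 12*(1+y)+13 := by linarith
  have hd4 : (0:ℝ) < 12*(1+y)+1 := by linarith
  have hd5 : (0:ℝ) < 1+y := by linarith
  have hd6 : (0:ℝ) < (1+y)+1 := by linarith
  have hN : (0:ℝ) < (94452680220249849831077679:ℝ) + (2050109771679124059524125419:ℝ)*y + (105634004983727723699224731129/5:ℝ)*y^2 + (689888086685532514024748930934/5:ℝ)*y^3 + (3213334831244906902930500080676/5:ℝ)*y^4 + (11382633474334527402938415417888/5:ℝ)*y^5 + (31919166015482069984480865820152/5:ℝ)*y^6 + (14560304583805496282034847216160:ℝ)*y^7 + (137672357578532189726686662978304/5:ℝ)*y^8 + (218906770936305476863368571554816/5:ℝ)*y^9 + (59145230763345664069743845010688:ℝ)*y^10 + (342043783241807883699028791143936/5:ℝ)*y^11 + (340617971645295847384785136920576/5:ℝ)*y^12 + (58635958748487992037497508349952:ℝ)*y^13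 + (218638195057417988369625786462208/5:ℝ)*y^14 + (141418641243168523668469190787072/5:ℝ)*y^15 + (79319971580013911197641808478208/5:ℝ)*y^16 + (38521060132925422577962040426496/5:ℝ)*y^17 + (3230196223619945064404289060864:ℝ)*y^18 + (1164089965666726144577378451456:ℝ)*y^19 + (1791629665999384213080565088256/5:ℝ)*y^20 + (93410728477334176793716850688:ℝ)*y^21 + (101935937860092077700758372352/5:ℝ)*y^22 + (18340221554388484129529266176/5:ℝ)*y^23 + (2663004347303749552642719744/5:ℝ)*y^24 + (302813013650245818960052224/5:ℝ)*y^25 + (25787582257854036672774144/5:ℝ)*y^26 + (1530784643215104694812672/5:ℝ)*y^27 + (55534885450724048633856/5:ℝ)*y^28 + (897524058588526411776/5:ℝ)*y^29 := by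
    linarith [pow_nonneg hy 1, pow_nonneg hy 2, pow_nonneg hy 3, pow_nonneg hy 4, pow_nonneg hy 5, pow_nonneg hy 6, pow_nonneg hy 7, pow_nonneg hy 8, pow_nonneg hy 9, pow_nonneg hy 10, pow_nonneg hy 11, pow_nonneg hy 12, pow_nonneg hy 13, pow_nonneg hy 14, pow_nonneg hy 15, pow_nonneg hy 16, pow_nonneg hy 17, pow_nonneg hy 18, pow_nonneg hy 19, pow_nonneg hy 20, pow_nonneg hy 21, pow_nonneg hy 22, pow_nonneg hy 23, pow_nonneg hy 24, pow_nonneg hy 25, pow_nonneg hy 26, pow_nonneg hy 27, pow_nonneg hy 28, pow_nonneg hy 29]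
  have hD : (0:ℝ) < (4*(1+y)+3)^7*((2*(1+y)+1)^7*((12*(1+y)+13)^7*((12*(1+y)+1)^7*(144*(1+y)^3*((1+y)+1)^3)))) :=
    mul_pos (pow_pos hd1 7) (mul_pos (pow_pos hd2 7) (mul_pos (pow_pos hd3 7)
      (mul_pos (pow_pos hd4 7) (mul_pos (by positivity) (pow_pos hd6 3)))))
  have key : -(2*(1/(4*(1+y)+3)) + 2*(1/(4*(1+y)+3))^3/3 + 2*(1/(4*(1+y)+3))^5/5 + 3*(1/(4*(1+y)+3))^7) + (1/2)*(2*(1/(2*(1+y)+1)) + 2*(1/(2*(1+y)+1))^3/3 + 2*(1/(2*(1+y)+1))^5/5 - 3*(1/(2*(1+y)+1))^7) + ((1+y)+4/3)*(2*(3/(12*(1+y)+13)) + 2*(3/(12*(1+y)+13))^3/3 + 2*(3/(12*(1+y)+13))^5/5 - 3*(3/(12*(1+y)+13))^7) - ((1+y)+1/3)*(2*(3/(12*(1+y)+1)) + 2*(3/(12*(1+y)+1))^3/3 + 2*(3/(12*(1+y)+1))^5/5 + 3*(3/(12*(1+y)+1))^7) + 1/(144*(1+y)^3) - 1/(144*(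(1+y)+1)^3)
      = ((94452680220249849831077679:ℝ) + (2050109771679124059524125419:ℝ)*y + (105634004983727723699224731129/5:ℝ)*y^2 + (689888086685532514024748930934/5:ℝ)*y^3 + (3213334831244906902930500080676/5:ℝ)*y^4 + (11382633474334527402938415417888/5:ℝ)*y^5 + (31919166015482069984480865820152/5:ℝ)*y^6 + (14560304583805496282034847216160:ℝ)*y^7 + (137672357578532189726686662978304/5:ℝ)*y^8 + (218906770936305476863368571554816/5:ℝ)*y^9 + (59145230763345664069743845010688:ℝ)*y^10 + (342043783241807883699028791143936/5:ℝ)*y^11 + (340617971645295847384785136920576/5:ℝ)*y^12 + (58635958748487992037497508349952:ℝ)*y^13 + (218638195057417988369625786462208/5:ℝ)*y^14 + (141418641243168523668469190787072/5:ℝ)*y^15 + (79319971580013911197641808478208/5:ℝ)*y^16 + (38521060132925422577962040426496/5:ℝ)*y^17 + (3230196223619945064404289060864:ℝ)*y^18 + (1164089965666726144577378451456:ℝ)*y^19 + (1791629665999384213080565088256/5:ℝ)*y^20 + (93410728477334176793716850688:ℝ)*y^21 + (101935937860092077700758372352/5:ℝ)*y^22 + (18340221554388484129529266176/5:ℝ)*y^23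 + (2663004347303749552642719744/5:ℝ)*y^24 + (302813013650245818960052224/5:ℝ)*y^25 + (25787582257854036672774144/5:ℝ)*y^26 + (1530784643215104694812672/5:ℝ)*y^27 + (55534885450724048633856/5:ℝ)*y^28 + (897524058588526411776/5:ℝ)*y^29) / ((4*(1+y)+3)^7*((2*(1+y)+1)^7*((12*(1+y)+13)^7*((12*(1+y)+1)^7*(144*(1+y)^3*((1+y)+1)^3))))) := by
    field_simp
    ring
  rw [key]
  exact div_pos hN hD


lemma G_dec (n : ℕ) (hn : 1 ≤ n) : G (n+1) < G n := by
  have hx : (1:ℝ) ≤ (n:ℝ) := by exact_mod_cast hn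
  set x := (n:ℝ) with hxdef
  have b1 := log_ratio_bounds (s := 1/(4*x+3)) (by positivity)
    (by rw [div_le_div_iff₀ (by linarith) (by norm_num)]; linarith)
  have b2 := log_ratio_bounds (s := 1/(2*x+1)) (by positivity)
    (by rw [div_le_div_iff₀ (by linarith) (by norm_num)]; linarith)
  have b3 := log_ratio_bounds (s := 3/(12*x+13)) (by positivity)
    (by rw [div_le_div_iff₀ (by linarith) (by norm_num)]; linarith)
  have b4 := log_ratio_bounds (s := 3/(12*x+1)) (by positivity)
    (by rw [div_le_div_iff₀ (by linarith) (by norm_num)]; linarith)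
  have hk := key1 hx
  have hdiff := G_diff_eq n hn
  have m3 : (x+4/3)*(Real.log (1 + 3/(12*x+13)) - Real.log (1 - 3/(12*x+13)))
      ≤ (x+4/3)*(2*(3/(12*x+13)) + 2*(3/(12*x+13))^3/3 + 2*(3/(12*x+13))^5/5 + 3*(3/(12*x+13))^7) :=
    mul_le_mul_of_nonneg_left b3.2 (by linarith)
  have m4 : (x+1/3)*(2*(3/(12*x+1)) + 2*(3/(12*x+1))^3/3 + 2*(3/(12*x+1))^5/5 - 3*(3/(12*x+1))^7)
      ≤ (x+1/3)*(Real.log (1 + 3/(12*x+1)) - Real.log (1 - 3/(12*x+1))) :=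
    mul_le_mul_of_nonneg_left b4.1 (by linarith)
  linarith [b1.1, b2.2, m3, m4]

lemma G_inc (n : ℕ) (hn : 1 ≤ n) :
    G n - 1/(144*(n:ℝ)^3) < G (n+1) - 1/(144*((n:ℝ)+1)^3) := by
  have hx : (1:ℝ) ≤ (n:ℝ) := by exact_mod_cast hn
  set x := (n:ℝ) with hxdef
  have b1 := log_ratio_bounds (s := 1/(4*x+3)) (by positivity)
    (by rw [div_le_div_iff₀ (by linarith) (by norm_num)]; linarith)
  have b2 := log_ratio_bounds (s := 1/(2*x+1)) (by positivity)
    (by rw [div_le_div_iff₀ (by linarith) (by norm_num)]; linarith)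
  have b3 := log_ratio_bounds (s := 3/(12*x+13)) (by positivity)
    (by rw [div_le_div_iff₀ (by linarith) (by norm_num)]; linarith)
  have b4 := log_ratio_bounds (s := 3/(12*x+1)) (by positivity)
    (by rw [div_le_div_iff₀ (by linarith) (by norm_num)]; linarith)
  have hk := key2 hx
  have hdiff := G_diff_eq n hn
  have m3 : (x+4/3)*(2*(3/(12*x+13)) + 2*(3/(12*x+13))^3/3 + 2*(3/(12*x+13))^5/5 - 3*(3/(12*x+13))^7)
      ≤ (x+4/3)*(Real.log (1 + 3/(12*x+13)) - Real.log (1 - 3/(12*x+13))) :=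
    mul_le_mul_of_nonneg_left b3.1 (by linarith)
  have m4 : (x+1/3)*(Real.log (1 + 3/(12*x+1)) - Real.log (1 - 3/(12*x+1)))
      ≤ (x+1/3)*(2*(3/(12*x+1)) + 2*(3/(12*x+1))^3/3 + 2*(3/(12*x+1))^5/5 + 3*(3/(12*x+1))^7) :=
    mul_le_mul_of_nonneg_left b4.2 (by linarith)
  linarith [b1.2, b2.1, m3, m4]

lemma G_anti : ∀ m n : ℕ, 1 ≤ n → n ≤ m → G m ≤ G n := by
  intro m n h1 h2
  induction m, h2 using Nat.le_induction with
  | base => exact le_refl _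
  | succ m hm ih => exact (G_dec m (le_trans h1 hm)).le.trans ih

lemma G_pos (n : ℕ) (hn : 1 ≤ n) : 0 < G n := by
  have h1 : (0:ℝ) ≤ G (n+1) := by
    apply le_of_tendsto G_tendsto
    exact eventually_atTop.2 ⟨n+1, fun m hm => G_anti m (n+1) (by omega) hm⟩
  exact h1.trans_lt (G_dec n hn)

lemma H_tendsto : Tendsto (fun n : ℕ => G n - 1/(144*(n:ℝ)^3)) atTop (𝓝 0) := by
  have h0 : Tendsto (fun n : ℕ => 1/(144*(n:ℝ)^3)) atTop (𝓝 0) := by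
    apply squeeze_zero (fun n => by positivity) (g := fun n : ℕ => 1/(n:ℝ))
    · intro t
      rcases Nat.eq_zero_or_pos t with h | h
      · simp [h]
      · have ht : (1:ℝ) ≤ t := by exact_mod_cast h
        apply one_div_le_one_div_of_le (by linarith)
        have h3 : (t:ℝ) ≤ (t:ℝ)^3 := by
          nlinarith [mul_nonneg (mul_nonneg (sub_nonneg.2 ht) (by linarith : (0:ℝ) ≤ (t:ℝ))) (by linarith : (0:ℝ) ≤ (t:ℝ)+1)]
        nlinarith
    · exact tendsto_one_div_atTop_nhds_zero_nat
  simpa using G_tendsto.sub h0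

lemma H_anti : ∀ m n : ℕ, 1 ≤ n → n ≤ m →
    G n - 1/(144*(n:ℝ)^3) ≤ G m - 1/(144*(m:ℝ)^3) := by
  intro m n h1 h2
  induction m, h2 using Nat.le_induction with
  | base => exact le_refl _
  | succ m hm ih =>
    refine ih.trans (le_of_lt ?_)
    have h := G_inc m (le_trans h1 hm)
    have hc : ((m+1:ℕ):ℝ) = (m:ℝ)+1 := by push_cast; ring
    rw [hc]
    exact h

lemma G_lt (n : ℕ) (hn : 1 ≤ n) : G n < 1/(144*(n:ℝ)^3) := by
  have h1 : G (n+1) - 1/(144*((n+1:ℕ):ℝ)^3) ≤ 0 := by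
    apply ge_of_tendsto H_tendsto
    exact eventually_atTop.2 ⟨n+1, fun m hm => H_anti m (n+1) (by omega) hm⟩
  have h2 := G_inc n hn
  have hc : ((n+1:ℕ):ℝ) = (n:ℝ)+1 := by push_cast; ring
  rw [hc] at h1
  linarith

theorem wallis_double_ineq (n : ℕ) (hn : 1 ≤ n) :
    Real.sqrt (Real.exp 1 / π) * (1 - 1 / (2 * ((n : ℝ) + 1/3))) ^ ((n : ℝ) + 1/3)
      * (1 / Real.sqrt n) < W n ∧
    W n < Real.sqrt (Real.exp 1 / π) * (1 - 1 / (2 * ((n : ℝ) + 1/3))) ^ ((n : ℝ) + 1/3)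
      * (1 / Real.sqrt n) * Real.exp (1 / (144 * (n : ℝ) ^ 3)) := by
  have hx : (1:ℝ) ≤ (n:ℝ) := by exact_mod_cast hn
  set x := (n:ℝ) with hxdef
  have hx0 : (0:ℝ) < x := by linarith
  have hB : 0 < 1 - 1/(2*(x+1/3)) := base_pos hx
  have hW := W_pos n
  have hL : 0 < Real.sqrt (Real.exp 1 / π) * (1 - 1/(2*(x+1/3))) ^ (x+1/3) * (1/Real.sqrt x) := by
    have h1 : 0 < Real.sqrt (Real.exp 1 / π) := Real.sqrt_pos.2 (by positivity)
    have h2 : 0 < (1 - 1/(2*(x+1/3))) ^ (x+1/3) := Real.rpow_pos_of_pos hB _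
    have h3 : 0 < 1/Real.sqrt x := by
      rw [one_div]
      exact inv_pos.2 (Real.sqrt_pos.2 hx0)
    positivity
  have hlogL : Real.log (Real.sqrt (Real.exp 1 / π) * (1 - 1/(2*(x+1/3))) ^ (x+1/3) * (1/Real.sqrt x))
      = 1/2 - (1/2)*Real.log π + (x+1/3)*Real.log (1 - 1/(2*(x+1/3))) - (1/2)*Real.log x := by
    rw [Real.log_mul (by positivity) (by positivity),
      Real.log_mul (Real.sqrt_pos.2 (by positivity)).ne' (Real.rpow_pos_of_pos hB _).ne',
      Real.log_rpow hB, Real.log_sqrt (by positivity),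
      Real.log_div (Real.exp_ne_zero 1) Real.pi_ne_zero, Real.log_exp,
      one_div (Real.sqrt x), Real.log_inv, Real.log_sqrt hx0.le]
    ring
  have hGpos := G_pos n hn
  have hGlt := G_lt n hn
  rw [G] at hGpos hGlt
  constructor
  · rw [← Real.exp_log hL, ← Real.exp_log hW]
    apply Real.exp_lt_exp.2
    rw [hlogL]
    linarith
  · have hR : 0 < Real.sqrt (Real.exp 1 / π) * (1 - 1/(2*(x+1/3))) ^ (x+1/3) * (1/Real.sqrt x)
        * Real.exp (1/(144*x^3)) := by positivity
    rw [← Real.exp_log hW, ← Real.exp_log hR]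
    apply Real.exp_lt_exp.2
    rw [Real.log_mul hL.ne' (Real.exp_ne_zero _), Real.log_exp, hlogL]
    linarith
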